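/- Let a > 0, λ₋ > 0, λ₊ > 0, τ > 0 and β ∈ ℝ be fixed. Then there exists a constant C > 0 (not depending on θ) such that for every θ > 0, ig(θ; a, a/λ₋) · ig(λ₊; a, a/θ) · φ(β; 0, θτ) = C · ig(θ; 2a + 1/2, a/λ₋ + a/λ₊ + β²/(2τ)). In other words, in the caravan hierarchy with θ ∣ λ₋ ∼ IG(a, a/λ₋), λ₊ ∣ θ ∼ IG(a, a/θ) and β ∣ θ, τ ∼ N(0, θτ), the full conditional of an interior chain variable θ given a, β, λ₋, λ₊, τ is IG(2a + 1/2, a/λ₋ + a/λ₊ + β²/(2τ)). -/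

import Mathlib

/-- The normal density with mean `μ` and variance `v`. -/
noncomputable def normalPdf (x μ v : ℝ) : ℝ :=
  (2 * Real.pi * v) ^ (-(1 : ℝ) / 2) * Real.exp (-(x - μ) ^ 2 / (2 * v))

/-- The inverse gamma density with shape `a` and scale `b`. -/
noncomputable def igPdf (x a b : ℝ) : ℝ :=
  b ^ a / Real.Gamma a * x ^ (-a - 1) * Real.exp (-b / x)

/-!
As functions of `θ > 0`, all three factors are constant multiples of inverse gamma kernels
`θ ^ (-s - 1) * exp (-r / θ)`: the prior of `θ` with `(s, r) = (a, a/λ₋)`, the density of `λ₊`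
(whose scale is `a/θ`) with `(a - 1, a/λ₊)`, and the normal density of `β` (whose variance is
`θτ`) with `(-1/2, β²/(2τ))`. Kernels multiply by adding rates and adding shapes plus one, which
gives the kernel of `IG(2a + 1/2, a/λ₋ + a/λ₊ + β²/(2τ))`.
-/

open Real

noncomputable def igKernel (θ s r : ℝ) : ℝ :=
  θ ^ (-s - 1) * exp (-r / θ)

theorem igPdf_eq_mul_igKernel (θ s r : ℝ) : igPdf θ s r = r ^ s / Gamma s * igKernel θ s r := by
  rw [igPdf, igKernel, mul_assoc]

theorem igKernel_eq_mul_igPdf {s r : ℝ} (hs : 0 < s) (hr : 0 < r) (θ : ℝ) :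
    igKernel θ s r = Gamma s / r ^ s * igPdf θ s r := by
  have : r ^ s / Gamma s ≠ 0 := by have := Gamma_pos_of_pos hs; positivity
  rw [igPdf_eq_mul_igKernel, ← mul_assoc, ← inv_div, inv_mul_cancel₀ this, one_mul]

theorem igKernel_mul {θ : ℝ} (hθ : 0 < θ) (s r t u : ℝ) :
    igKernel θ s r * igKernel θ t u = igKernel θ (s + t + 1) (r + u) := by
  simp only [igKernel]
  rw [mul_mul_mul_comm, ← rpow_add hθ, ← exp_add]
  ring_nf

theorem igPdf_scale_div (x s c : ℝ) {θ : ℝ} (hc : 0 ≤ c) (hθ : 0 ≤ θ) :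
    igPdf x s (c / θ) = c ^ s * x ^ (-s - 1) / Gamma s * igKernel θ (s - 1) (c / x) := by
  rw [igPdf, igKernel, div_rpow hc hθ, div_eq_mul_inv (c ^ s), ← rpow_neg hθ]
  ring_nf

theorem normalPdf_zero_mul_variance (x : ℝ) {θ τ : ℝ} (hθ : 0 ≤ θ) (hτ : 0 ≤ τ) :
    normalPdf x 0 (θ * τ)
      = (2 * π * τ) ^ (-(1 : ℝ) / 2) * igKernel θ (-1 / 2) (x ^ 2 / (2 * τ)) := by
  rw [normalPdf, igKernel, show 2 * π * (θ * τ) = 2 * π * τ * θ by ring,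
    mul_rpow (by positivity) hθ]
  ring_nf

/-- In the caravan hierarchy with `θ ∣ λ₋ ∼ IG(a, a/λ₋)`, `λ₊ ∣ θ ∼ IG(a, a/θ)` and
`β ∣ θ, τ ∼ N(0, θτ)`, the full conditional of an interior chain variable `θ` is
`IG(2a + 1/2, a/λ₋ + a/λ₊ + β²/(2τ))`. -/
theorem caravan_full_conditional_theta_interior
    (a lamm lamp τ : ℝ) (ha : 0 < a) (hlamm : 0 < lamm) (hlamp : 0 < lamp)
    (hτ : 0 < τ) (β : ℝ) :
    ∃ C : ℝ, 0 < C ∧ ∀ θ : ℝ, 0 < θ →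
      igPdf θ a (a / lamm) * igPdf lamp a (a / θ) * normalPdf β 0 (θ * τ)
        = C * igPdf θ (2 * a + 1 / 2) (a / lamm + a / lamp + β ^ 2 / (2 * τ)) := by
  set b := a / lamm + a / lamp + β ^ 2 / (2 * τ)
  have hb : 0 < b := by positivity
  have := Gamma_pos_of_pos ha
  have := Gamma_pos_of_pos (show 0 < 2 * a + 1 / 2 by positivity)
  refine ⟨(a / lamm) ^ a / Gamma a * (a ^ a * lamp ^ (-a - 1) / Gamma a)
      * (2 * π * τ) ^ (-(1 : ℝ) / 2) * (Gamma (2 * a + 1 / 2) / b ^ (2 * a + 1 / 2)),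
    by positivity, fun θ hθ => ?_⟩
  have hkernel : igKernel θ a (a / lamm) * igKernel θ (a - 1) (a / lamp)
      * igKernel θ (-1 / 2) (β ^ 2 / (2 * τ))
      = Gamma (2 * a + 1 / 2) / b ^ (2 * a + 1 / 2) * igPdf θ (2 * a + 1 / 2) b := by
    rw [igKernel_mul hθ, igKernel_mul hθ, ← igKernel_eq_mul_igPdf (by positivity) hb]
    congr 1; ring
  rw [igPdf_eq_mul_igKernel θ a, igPdf_scale_div _ _ _ ha.le hθ.le,
    normalPdf_zero_mul_variance _ hθ.le hτ.le]
  linear_combination (a / lamm) ^ a / Gamma a * (a ^ a * lamp ^ (-a - 1) / Gamma a)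
    * (2 * π * τ) ^ (-(1 : ℝ) / 2) * hkernel
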